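/- arXiv:math/0507127 — 2 statements merged into one kernel-verified Lean document; each statement's English description precedes it below -/
import Mathlib

section
/- Let G be a cubic graph containing a twin-triangle on v1, v2, v3, v4 (edges (v1,v2),(v2,v3),(v2,v4),(v1,v3),(v3,v4)) with external edges (v1,v5) and (v4,v6), v5 ≠ v6 outside the configuration. Let G' be obtained from G by deleting v1, v2, v3, v4 and adding the edge (v5,v6). Then G is 3-edge-colorable if and only if G' is 3-edge-colorable. -/
open SimpleGraph

/-- A proper edge coloring: distinct edges of `G` sharing an endpoint get distinct colors. -/
def IsProperEdgeColoring {V : Type*} {α : Type*} (G : SimpleGraph V) (c : Sym2 V → α) : Prop :=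
  ∀ e₁ ∈ G.edgeSet, ∀ e₂ ∈ G.edgeSet, e₁ ≠ e₂ → (∃ v, v ∈ e₁ ∧ v ∈ e₂) → c e₁ ≠ c e₂

/-- A graph is 3-edge-colorable if it admits a proper edge coloring with 3 colors. -/
def ThreeEdgeColorable {V : Type*} (G : SimpleGraph V) : Prop :=
  ∃ c : Sym2 V → Fin 3, IsProperEdgeColoring G c

/-!
In a proper 3-edge-colouring of `G` each external edge lies opposite the middle edge `v₂v₃` at a
triangle, so `v₁v₅` and `v₄v₆` both get the colour of `v₂v₃`; merging them into `v₅v₆` colours `G'`.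
Conversely, a colouring of `G'` extends over the twin triangle as soon as one colour `γ` is missing
at `v₅` and at `v₆` among their surviving edges: `v₁v₅`, `v₂v₃`, `v₄v₆` get `γ` and the pairs of
opposite edges `v₁v₂, v₃v₄` and `v₁v₃, v₂v₄` the two other colours. If `v₅v₆` is a new edge, its
colour is such a `γ`. If it was already an edge of `G`, then `v₅` and `v₆` have degree two in `G'`
and every other surviving vertex degree three; a colour class is a matching and so meets an even
number of vertices, and since `|V|` is even, a colour missing at `v₅` is missing at `v₆` as well.
-/

section

variable {V W α : Type*}

theorem fin_three_eq_of_ne_of_ne {a b x y : Fin 3} (hab : a ≠ b) (hxa : x ≠ a) (hxb : x ≠ b)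
    (hya : y ≠ a) (hyb : y ≠ b) : x = y := by
  revert a b x y; decide

theorem exists_ne_ne_fin_three (a b : Fin 3) : ∃ γ, a ≠ γ ∧ b ≠ γ := by
  revert a b; decide

theorem isProperEdgeColoring_iff_injOn {G : SimpleGraph V} {c : Sym2 V → α} :
    IsProperEdgeColoring G c ↔ ∀ a, Set.InjOn (fun x => c s(a, x)) (G.neighborSet a) := by
  refine ⟨fun hc a x hx y hy hxy => ?_, fun hc e₁ he₁ e₂ he₂ hne ⟨v, hv₁, hv₂⟩ hce => ?_⟩
  · by_contra hne
    exact hc _ hx _ hy (fun h => hne (Sym2.congr_right.1 h))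
      ⟨a, Sym2.mem_mk_left _ _, Sym2.mem_mk_left _ _⟩ hxy
  · obtain ⟨x, rfl⟩ := Sym2.mem_iff_exists.1 hv₁
    obtain ⟨y, rfl⟩ := Sym2.mem_iff_exists.1 hv₂
    exact hne (congrArg _ (hc v he₁ he₂ hce))

namespace IsProperEdgeColoring

variable {G : SimpleGraph V} {c : Sym2 V → α}

theorem ne (hc : IsProperEdgeColoring G c) {a x y : V} (hx : G.Adj a x) (hy : G.Adj a y)
    (hxy : x ≠ y) : c s(a, x) ≠ c s(a, y) :=
  fun h => hxy (isProperEdgeColoring_iff_injOn.1 hc a hx hy h)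

theorem comap {H : SimpleGraph W} {c : Sym2 W → α} (hc : IsProperEdgeColoring H c) (f : G ↪g H) :
    IsProperEdgeColoring G (c ∘ Sym2.map f) :=
  isProperEdgeColoring_iff_injOn.2 fun a _ hx _ hy hxy =>
    f.injective (isProperEdgeColoring_iff_injOn.1 hc (f a) (f.map_adj_iff.2 hx)
      (f.map_adj_iff.2 hy) hxy)

theorem map (hc : IsProperEdgeColoring G c) (f : V ↪ W) {g : W → V}
    (hg : Function.LeftInverse g f) : IsProperEdgeColoring (G.map f) (c ∘ Sym2.map g) := by
  refine isProperEdgeColoring_iff_injOn.2 fun a x hx y hy hxy => ?_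
  obtain ⟨-, a, x, hx, rfl, rfl⟩ := hx
  obtain ⟨-, a', y, hy, ha, rfl⟩ := hy
  obtain rfl := f.injective ha
  simp only [Function.comp_apply, Sym2.map_mk, hg _] at hxy
  rw [isProperEdgeColoring_iff_injOn.1 hc a' hx hy hxy]

theorem of_lift {H : SimpleGraph V} {c' : Sym2 V → α} (hc : IsProperEdgeColoring G c)
    (φ : V → V → V) (hadj : ∀ a x, H.Adj a x → G.Adj a (φ a x))
    (hcol : ∀ a x, H.Adj a x → c' s(a, x) = c s(a, φ a x))
    (hinj : ∀ a, Set.InjOn (φ a) (H.neighborSet a)) : IsProperEdgeColoring H c' :=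
  isProperEdgeColoring_iff_injOn.2 fun a =>
    ((isProperEdgeColoring_iff_injOn.1 hc a).comp (hinj a) fun x hx => hadj a x hx).congr
      fun x hx => (hcol a x hx).symm

theorem even_ncard_setOf_exists_adj [Finite V] (hc : IsProperEdgeColoring G c) (γ : α) :
    Even {v | ∃ w, G.Adj v w ∧ c s(v, w) = γ}.ncard := by
  classical
  let M : G.Subgraph :=
    { verts := {v | ∃ w, G.Adj v w ∧ c s(v, w) = γ}
      Adj := fun v w => G.Adj v w ∧ c s(v, w) = γ
      adj_sub := And.left
      edge_vert := fun h => ⟨_, h⟩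
      symm := ⟨fun v w ⟨hvw, hγ⟩ => ⟨hvw.symm, Sym2.eq_swap ▸ hγ⟩⟩ }
  have hM : M.IsMatching := fun v ⟨w, hw⟩ =>
    ⟨w, hw, fun w' hw' => by_contra fun hne => hc.ne hw'.1 hw.1 hne (hw'.2.trans hw.2.symm)⟩
  have := Fintype.ofFinite M.verts
  rw [Set.ncard_eq_toFinset_card']
  exact hM.even_card

theorem exists_adj_eq {c : Sym2 V → Fin 3} (hc : IsProperEdgeColoring G c) {a x y z : V}
    (hx : G.Adj a x) (hy : G.Adj a y) (hz : G.Adj a z) (hxy : x ≠ y) (hxz : x ≠ z) (hyz : y ≠ z)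
    (γ : Fin 3) : ∃ w, G.Adj a w ∧ c s(a, w) = γ := by
  by_contra! h
  exact h z hz (fin_three_eq_of_ne_of_ne (hc.ne hx hy hxy) (h x hx).symm (h y hy).symm
    (hc.ne hx hz hxz).symm (hc.ne hy hz hyz).symm).symm

theorem eq_opposite_of_triangle {c : Sym2 V → Fin 3} (hc : IsProperEdgeColoring G c)
    {a x y z : V} (hx : G.Adj a x) (hy : G.Adj a y) (hxy : G.Adj x y) (hz : G.Adj a z)
    (hxz : x ≠ z) (hyz : y ≠ z) : c s(a, z) = c s(x, y) := by
  refine fin_three_eq_of_ne_of_ne (hc.ne hx hy hxy.ne) (hc.ne hz hx hxz.symm)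
    (hc.ne hz hy hyz.symm) ?_ ?_
  · rw [Sym2.eq_swap (a := a)]
    exact hc.ne hxy hx.symm hy.ne'
  · rw [Sym2.eq_swap (a := x), Sym2.eq_swap (a := a)]
    exact hc.ne hxy.symm hy.symm hx.ne'

end IsProperEdgeColoring

theorem threeEdgeColorable_map_iff (f : V ↪ W) (G : SimpleGraph V) :
    ThreeEdgeColorable (G.map f) ↔ ThreeEdgeColorable G := by
  refine ⟨fun ⟨c, hc⟩ => ⟨_, hc.comap (Embedding.map f G)⟩, fun ⟨c, hc⟩ => ?_⟩
  cases isEmpty_or_nonempty V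
  · refine ⟨fun _ => 0, fun e he => ?_⟩
    induction e using Sym2.ind with
    | _ a b => obtain ⟨-, a, -, -, -, -⟩ := he; exact isEmptyElim a
  · exact ⟨_, hc.map f (Function.leftInverse_invFun f.injective)⟩

theorem threeEdgeColorable_induce_iff {G : SimpleGraph V} {s : Set V} (h : G.support ⊆ s) :
    ThreeEdgeColorable (G.induce s) ↔ ThreeEdgeColorable G := by
  have hG : (G.induce s).map (Function.Embedding.subtype s) = G :=
    (spanningCoe_induce_eq_self G s).2 h
  rw [← threeEdgeColorable_map_iff (Function.Embedding.subtype s) (G.induce s), hG]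

namespace SimpleGraph

variable {G : SimpleGraph V} {a : V} [Fintype (G.neighborSet a)]

theorem neighborSet_eq_of_degree_eq_three (ha : G.degree a = 3) {x y z : V} (hx : G.Adj a x)
    (hy : G.Adj a y) (hz : G.Adj a z) (hxy : x ≠ y) (hxz : x ≠ z) (hyz : y ≠ z) :
    G.neighborSet a = {x, y, z} := by
  classical
  have hsub : {x, y, z} ⊆ G.neighborFinset a := by simp [Finset.insert_subset_iff, hx, hy, hz]
  have hcard : ({x, y, z} : Finset V).card = 3 := by simp [hxy, hxz, hyz]
  rw [← coe_neighborFinset, ← Finset.eq_of_subset_of_card_le hsub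
    (by rw [hcard, card_neighborFinset_eq_degree, ha])]
  simp

theorem exists_three_adj_of_degree_eq_three (ha : G.degree a = 3) :
    ∃ x y z, G.Adj a x ∧ G.Adj a y ∧ G.Adj a z ∧ x ≠ y ∧ x ≠ z ∧ y ≠ z := by
  classical
  obtain ⟨x, y, z, hxy, hxz, hyz, h⟩ :=
    Finset.card_eq_three.1 ((card_neighborFinset_eq_degree G a).trans ha)
  have hadj : ∀ w ∈ ({x, y, z} : Finset V), G.Adj a w := fun w hw => by
    rwa [← h, mem_neighborFinset] at hw
  exact ⟨x, y, z, hadj x (by simp), hadj y (by simp), hadj z (by simp), hxy, hxz, hyz⟩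

theorem exists_adj_ne_ne_of_degree_eq_three (ha : G.degree a = 3) (x y : V) :
    ∃ z, G.Adj a z ∧ z ≠ x ∧ z ≠ y := by
  classical
  have : 0 < (G.neighborFinset a \ {x, y}).card := by
    have := Finset.le_card_sdiff {x, y} (G.neighborFinset a)
    have := Finset.card_le_two (a := x) (b := y)
    rw [card_neighborFinset_eq_degree, ha] at *
    omega
  obtain ⟨z, hz⟩ := Finset.card_pos.1 this
  simp only [Finset.mem_sdiff, mem_neighborFinset, Finset.mem_insert, Finset.mem_singleton,
    not_or] at hz
  exact ⟨z, hz.1, hz.2⟩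

theorem IsRegularOfDegree.even_card [Fintype V] [DecidableRel G.Adj] {d : ℕ}
    (hG : G.IsRegularOfDegree d) (hd : Odd d) : Even (Fintype.card V) := by
  simpa [hG.degree_eq, hd] using G.even_card_odd_degree_vertices

end SimpleGraph

structure IsTwinTriangle (G : SimpleGraph V) (v₁ v₂ v₃ v₄ v₅ v₆ : V) : Prop where
  nodup : [v₁, v₂, v₃, v₄, v₅, v₆].Nodup
  adj₁₂ : G.Adj v₁ v₂
  adj₂₃ : G.Adj v₂ v₃
  adj₂₄ : G.Adj v₂ v₄
  adj₁₃ : G.Adj v₁ v₃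
  adj₃₄ : G.Adj v₃ v₄
  adj₁₅ : G.Adj v₁ v₅
  adj₄₆ : G.Adj v₄ v₆

/-- The graph `G'`, kept on the vertex type of `G`: `v₁, …, v₄` stay behind as isolated
vertices. -/
def twinTriangleReduction (G : SimpleGraph V) (v₁ v₂ v₃ v₄ v₅ v₆ : V) : SimpleGraph V :=
  fromRel fun a b =>
    (G.Adj a b ∧ a ∉ ({v₁, v₂, v₃, v₄} : Set V) ∧ b ∉ ({v₁, v₂, v₃, v₄} : Set V)) ∨
      (a = v₅ ∧ b = v₆)

def twinTriangleExtension [DecidableEq V] (v₁ v₂ v₃ v₄ v₅ v₆ : V) (c : Sym2 V → Fin 3)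
    (γ : Fin 3) (e : Sym2 V) : Fin 3 :=
  if e = s(v₂, v₃) ∨ e = s(v₁, v₅) ∨ e = s(v₄, v₆) then γ
  else if e = s(v₁, v₂) ∨ e = s(v₃, v₄) then γ + 1
  else if e = s(v₁, v₃) ∨ e = s(v₂, v₄) then γ + 2
  else c e

variable {G : SimpleGraph V} {v₁ v₂ v₃ v₄ v₅ v₆ : V}

theorem twinTriangleReduction_adj (h₅₆ : v₅ ≠ v₆) {a b : V} :
    (twinTriangleReduction G v₁ v₂ v₃ v₄ v₅ v₆).Adj a b ↔
      (G.Adj a b ∧ a ∉ ({v₁, v₂, v₃, v₄} : Set V) ∧ b ∉ ({v₁, v₂, v₃, v₄} : Set V)) ∨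
        s(a, b) = s(v₅, v₆) := by
  rw [twinTriangleReduction, fromRel_adj, Sym2.eq_iff]
  constructor
  · rintro ⟨-, (h | h) | ⟨hab, ha, hb⟩ | ⟨rfl, rfl⟩⟩
    · exact .inl h
    · exact .inr (.inl h)
    · exact .inl ⟨hab.symm, hb, ha⟩
    · exact .inr (.inr ⟨rfl, rfl⟩)
  · rintro (h | ⟨rfl, rfl⟩ | ⟨rfl, rfl⟩)
    · exact ⟨h.1.ne, .inl (.inl h)⟩
    · exact ⟨h₅₆, .inl (.inr ⟨rfl, rfl⟩)⟩
    · exact ⟨h₅₆.symm, .inr (.inr ⟨rfl, rfl⟩)⟩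

theorem twinTriangleExtension_of_notMem [DecidableEq V] {c : Sym2 V → Fin 3} {γ : Fin 3} {a b : V}
    (ha : a ∉ ({v₁, v₂, v₃, v₄} : Set V)) (hb : b ∉ ({v₁, v₂, v₃, v₄} : Set V)) :
    twinTriangleExtension v₁ v₂ v₃ v₄ v₅ v₆ c γ s(a, b) = c s(a, b) := by
  simp only [Set.mem_insert_iff, Set.mem_singleton_iff, not_or] at ha hb
  simp [twinTriangleExtension, ha, hb, Ne.symm]

namespace IsTwinTriangle

theorem pairwise_ne (h : IsTwinTriangle G v₁ v₂ v₃ v₄ v₅ v₆) :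
    (v₁ ≠ v₂ ∧ v₁ ≠ v₃ ∧ v₁ ≠ v₄ ∧ v₁ ≠ v₅ ∧ v₁ ≠ v₆) ∧ (v₂ ≠ v₃ ∧ v₂ ≠ v₄ ∧ v₂ ≠ v₅ ∧ v₂ ≠ v₆) ∧
      (v₃ ≠ v₄ ∧ v₃ ≠ v₅ ∧ v₃ ≠ v₆) ∧ (v₄ ≠ v₅ ∧ v₄ ≠ v₆) ∧ v₅ ≠ v₆ := by
  simpa using h.nodup

theorem support_twinTriangleReduction_subset (h : IsTwinTriangle G v₁ v₂ v₃ v₄ v₅ v₆) :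
    (twinTriangleReduction G v₁ v₂ v₃ v₄ v₅ v₆).support ⊆ {x | x ∉ ({v₁, v₂, v₃, v₄} : Set V)} := by
  obtain ⟨⟨-, -, -, n₁₅, n₁₆⟩, ⟨-, -, n₂₅, n₂₆⟩, ⟨-, n₃₅, n₃₆⟩, ⟨n₄₅, n₄₆⟩, n₅₆⟩ := h.pairwise_ne
  rintro a ⟨b, hab⟩
  rcases (twinTriangleReduction_adj n₅₆).1 hab with ⟨-, ha, -⟩ | hab
  · exact ha
  · rcases Sym2.eq_iff.1 hab with ⟨rfl, -⟩ | ⟨rfl, -⟩ <;> simp [*, ne_comm]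

theorem external_colors_eq {c : Sym2 V → Fin 3} (h : IsTwinTriangle G v₁ v₂ v₃ v₄ v₅ v₆)
    (hc : IsProperEdgeColoring G c) : c s(v₁, v₅) = c s(v₄, v₆) := by
  obtain ⟨-, ⟨-, -, n₂₅, n₂₆⟩, ⟨-, n₃₅, n₃₆⟩, -, -⟩ := h.pairwise_ne
  rw [hc.eq_opposite_of_triangle h.adj₁₂ h.adj₁₃ h.adj₂₃ h.adj₁₅ n₂₅ n₃₅,
    hc.eq_opposite_of_triangle h.adj₂₄.symm h.adj₃₄.symm h.adj₂₃ h.adj₄₆ n₂₆ n₃₆]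

theorem threeEdgeColorable_twinTriangleReduction (h : IsTwinTriangle G v₁ v₂ v₃ v₄ v₅ v₆) :
    ThreeEdgeColorable G → ThreeEdgeColorable (twinTriangleReduction G v₁ v₂ v₃ v₄ v₅ v₆) := by
  classical
  rintro ⟨c, hc⟩
  obtain ⟨-, -, -, -, n₅₆⟩ := h.pairwise_ne
  -- `φ a x` is the neighbour of `a` in `G` whose edge lends its colour to the reduced edge `ax`.
  let φ : V → V → V := fun a x => if s(a, x) = s(v₅, v₆) then (if a = v₅ then v₁ else v₄) else x
  have hφS : ∀ a x, (twinTriangleReduction G v₁ v₂ v₃ v₄ v₅ v₆).Adj a x →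
      (φ a x ∈ ({v₁, v₂, v₃, v₄} : Set V) ↔ s(a, x) = s(v₅, v₆)) := by
    intro a x hax
    rw [twinTriangleReduction_adj n₅₆] at hax
    by_cases hs : s(a, x) = s(v₅, v₆)
    · simp only [φ, hs, if_true, iff_true]
      split_ifs <;> simp
    · simp only [φ, if_neg hs, hs, iff_false]
      exact (hax.resolve_right hs).2.2
  refine ⟨fun e => if e = s(v₅, v₆) then c s(v₁, v₅) else c e, hc.of_lift φ ?_ ?_ ?_⟩
  · intro a x hax
    rw [twinTriangleReduction_adj n₅₆] at hax
    simp only [φ]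
    split_ifs with hs ha
    · exact ha ▸ h.adj₁₅.symm
    · rcases Sym2.eq_iff.1 hs with ⟨rfl, -⟩ | ⟨rfl, -⟩
      · exact absurd rfl ha
      · exact h.adj₄₆.symm
    · exact (hax.resolve_right hs).1
  · intro a x hax
    simp only [φ]
    split_ifs with hs ha
    · rw [ha, Sym2.eq_swap]
    · rcases Sym2.eq_iff.1 hs with ⟨rfl, -⟩ | ⟨rfl, -⟩
      · exact absurd rfl ha
      · rw [h.external_colors_eq hc, Sym2.eq_swap]
    · rfl
  · intro a x hx y hy hxy
    have hsxy : s(a, x) = s(v₅, v₆) ↔ s(a, y) = s(v₅, v₆) := by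
      rw [← hφS a x hx, ← hφS a y hy, hxy]
    by_cases hs : s(a, x) = s(v₅, v₆)
    · exact Sym2.congr_right.1 (hs.trans (hsxy.1 hs).symm)
    · simpa only [φ, if_neg hs, if_neg (hsxy.not.1 hs)] using hxy

section LocallyFinite

variable [G.LocallyFinite]

theorem neighborSet₁ (h : IsTwinTriangle G v₁ v₂ v₃ v₄ v₅ v₆) (hG : G.IsRegularOfDegree 3) :
    G.neighborSet v₁ = {v₂, v₃, v₅} := by
  obtain ⟨-, ⟨n₂₃, -, n₂₅, -⟩, ⟨-, n₃₅, -⟩, -⟩ := h.pairwise_ne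
  exact neighborSet_eq_of_degree_eq_three (hG.degree_eq _) h.adj₁₂ h.adj₁₃ h.adj₁₅ n₂₃ n₂₅ n₃₅

theorem neighborSet₂ (h : IsTwinTriangle G v₁ v₂ v₃ v₄ v₅ v₆) (hG : G.IsRegularOfDegree 3) :
    G.neighborSet v₂ = {v₁, v₃, v₄} := by
  obtain ⟨⟨-, n₁₃, n₁₄, -⟩, -, ⟨n₃₄, -⟩, -⟩ := h.pairwise_ne
  exact neighborSet_eq_of_degree_eq_three (hG.degree_eq _) h.adj₁₂.symm h.adj₂₃ h.adj₂₄ n₁₃ n₁₄ n₃₄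

theorem neighborSet₃ (h : IsTwinTriangle G v₁ v₂ v₃ v₄ v₅ v₆) (hG : G.IsRegularOfDegree 3) :
    G.neighborSet v₃ = {v₁, v₂, v₄} := by
  obtain ⟨⟨n₁₂, -, n₁₄, -⟩, ⟨-, n₂₄, -⟩, -⟩ := h.pairwise_ne
  exact neighborSet_eq_of_degree_eq_three (hG.degree_eq _) h.adj₁₃.symm h.adj₂₃.symm h.adj₃₄
    n₁₂ n₁₄ n₂₄

theorem neighborSet₄ (h : IsTwinTriangle G v₁ v₂ v₃ v₄ v₅ v₆) (hG : G.IsRegularOfDegree 3) :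
    G.neighborSet v₄ = {v₂, v₃, v₆} := by
  obtain ⟨-, ⟨n₂₃, -, -, n₂₆⟩, ⟨-, -, n₃₆⟩, -⟩ := h.pairwise_ne
  exact neighborSet_eq_of_degree_eq_three (hG.degree_eq _) h.adj₂₄.symm h.adj₃₄.symm h.adj₄₆
    n₂₃ n₂₆ n₃₆

theorem eq_of_adj_of_notMem_of_mem (h : IsTwinTriangle G v₁ v₂ v₃ v₄ v₅ v₆)
    (hG : G.IsRegularOfDegree 3) {a x : V} (hax : G.Adj a x)
    (ha : a ∉ ({v₁, v₂, v₃, v₄} : Set V)) (hx : x ∈ ({v₁, v₂, v₃, v₄} : Set V)) :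
    a = v₅ ∧ x = v₁ ∨ a = v₆ ∧ x = v₄ := by
  have hxa := hax.symm
  rcases hx with rfl | rfl | rfl | rfl
  · rw [← mem_neighborSet, h.neighborSet₁ hG] at hxa
    rcases hxa with rfl | rfl | rfl <;> simp_all
  · rw [← mem_neighborSet, h.neighborSet₂ hG] at hxa
    rcases hxa with rfl | rfl | rfl <;> simp_all
  · rw [← mem_neighborSet, h.neighborSet₃ hG] at hxa
    rcases hxa with rfl | rfl | rfl <;> simp_all
  · rw [← mem_neighborSet, h.neighborSet₄ hG] at hxa
    rcases hxa with rfl | rfl | rfl <;> simp_all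

theorem notMem_of_adj (h : IsTwinTriangle G v₁ v₂ v₃ v₄ v₅ v₆)
    (hG : G.IsRegularOfDegree 3) {a x : V} (hax : G.Adj a x)
    (ha : a ∉ ({v₁, v₂, v₃, v₄} : Set V)) (h₅ : a = v₅ → x ≠ v₁) (h₆ : a = v₆ → x ≠ v₄) :
    x ∉ ({v₁, v₂, v₃, v₄} : Set V) := fun hx => by
  rcases h.eq_of_adj_of_notMem_of_mem hG hax ha hx with ⟨ha, hx⟩ | ⟨ha, hx⟩
  exacts [h₅ ha hx, h₆ ha hx]

theorem isProperEdgeColoring_twinTriangleExtension [DecidableEq V]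
    (h : IsTwinTriangle G v₁ v₂ v₃ v₄ v₅ v₆) (hG : G.IsRegularOfDegree 3) {c : Sym2 V → Fin 3}
    (hc : IsProperEdgeColoring (twinTriangleReduction G v₁ v₂ v₃ v₄ v₅ v₆) c) {γ : Fin 3}
    (h₅ : ∀ x, G.Adj v₅ x → x ≠ v₁ → c s(v₅, x) ≠ γ)
    (h₆ : ∀ x, G.Adj v₆ x → x ≠ v₄ → c s(v₆, x) ≠ γ) :
    IsProperEdgeColoring G (twinTriangleExtension v₁ v₂ v₃ v₄ v₅ v₆ c γ) := by
  obtain ⟨⟨n₁₂, n₁₃, n₁₄, n₁₅, n₁₆⟩, ⟨n₂₃, n₂₄, n₂₅, n₂₆⟩, ⟨n₃₄, n₃₅, n₃₆⟩, ⟨n₄₅, n₄₆⟩, n₅₆⟩ :=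
    h.pairwise_ne
  rw [isProperEdgeColoring_iff_injOn]
  intro a
  by_cases ha : a ∈ ({v₁, v₂, v₃, v₄} : Set V)
  · rcases ha with rfl | rfl | rfl | rfl <;>
      simp only [h.neighborSet₁ hG, h.neighborSet₂ hG, h.neighborSet₃ hG, h.neighborSet₄ hG] <;>
      simp [Set.InjOn, twinTriangleExtension, *, Ne.symm]
  have hoff : ∀ x, x ∉ ({v₁, v₂, v₃, v₄} : Set V) →
      twinTriangleExtension v₁ v₂ v₃ v₄ v₅ v₆ c γ s(a, x) = c s(a, x) :=
    fun x hx => twinTriangleExtension_of_notMem ha hx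
  have hS : ∀ x, G.Adj a x → x ∈ ({v₁, v₂, v₃, v₄} : Set V) →
      twinTriangleExtension v₁ v₂ v₃ v₄ v₅ v₆ c γ s(a, x) = γ ∧
        ∀ y, G.Adj a y → y ∉ ({v₁, v₂, v₃, v₄} : Set V) → c s(a, y) ≠ γ := by
    intro x hx hxS
    rcases h.eq_of_adj_of_notMem_of_mem hG hx ha hxS with ⟨rfl, rfl⟩ | ⟨rfl, rfl⟩
    · refine ⟨by simp [twinTriangleExtension, Sym2.eq_swap], fun y hy hyS => h₅ y hy ?_⟩
      rintro rfl; simp at hyS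
    · refine ⟨by simp [twinTriangleExtension, Sym2.eq_swap], fun y hy hyS => h₆ y hy ?_⟩
      rintro rfl; simp at hyS
  have hSuniq : ∀ x y, G.Adj a x → G.Adj a y → x ∈ ({v₁, v₂, v₃, v₄} : Set V) →
      y ∈ ({v₁, v₂, v₃, v₄} : Set V) → x = y := by
    intro x y hx hy hxS hyS
    rcases h.eq_of_adj_of_notMem_of_mem hG hx ha hxS with ⟨rfl, rfl⟩ | ⟨rfl, rfl⟩ <;>
      rcases h.eq_of_adj_of_notMem_of_mem hG hy ha hyS with ⟨h', rfl⟩ | ⟨h', rfl⟩ <;>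
      simp_all
  intro x hx y hy (hxy : twinTriangleExtension v₁ v₂ v₃ v₄ v₅ v₆ c γ s(a, x) =
    twinTriangleExtension v₁ v₂ v₃ v₄ v₅ v₆ c γ s(a, y))
  by_cases hxS : x ∈ ({v₁, v₂, v₃, v₄} : Set V) <;> by_cases hyS : y ∈ ({v₁, v₂, v₃, v₄} : Set V)
  · exact hSuniq x y hx hy hxS hyS
  · exact absurd ((hS x hx hxS).1.symm.trans (hxy.trans (hoff y hyS)))
      ((hS x hx hxS).2 y hy hyS).symm
  · exact absurd ((hS y hy hyS).1.symm.trans (hxy.symm.trans (hoff x hxS)))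
      ((hS y hy hyS).2 x hx hxS).symm
  · rw [hoff x hxS, hoff y hyS] at hxy
    exact isProperEdgeColoring_iff_injOn.1 hc a
      ((twinTriangleReduction_adj n₅₆).2 (.inl ⟨hx, ha, hxS⟩))
      ((twinTriangleReduction_adj n₅₆).2 (.inl ⟨hy, ha, hyS⟩)) hxy

theorem compl_setOf_exists_adj_color_eq (h : IsTwinTriangle G v₁ v₂ v₃ v₄ v₅ v₆)
    (hG : G.IsRegularOfDegree 3)
    {c : Sym2 V → Fin 3} (hc : IsProperEdgeColoring (twinTriangleReduction G v₁ v₂ v₃ v₄ v₅ v₆) c)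
    {γ : Fin 3} (h₅ : ∀ x, (twinTriangleReduction G v₁ v₂ v₃ v₄ v₅ v₆).Adj v₅ x → c s(v₅, x) ≠ γ)
    (h₆ : ∃ x, (twinTriangleReduction G v₁ v₂ v₃ v₄ v₅ v₆).Adj v₆ x ∧ c s(v₆, x) = γ) :
    {v | ∃ w, (twinTriangleReduction G v₁ v₂ v₃ v₄ v₅ v₆).Adj v w ∧ c s(v, w) = γ}ᶜ =
      {v₁, v₂, v₃, v₄, v₅} := by
  obtain ⟨-, -, -, -, n₅₆⟩ := h.pairwise_ne
  ext v
  simp only [Set.mem_compl_iff, Set.mem_ofPred_eq]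
  constructor
  · intro hv
    by_contra hv'
    have hvS : v ∉ ({v₁, v₂, v₃, v₄} : Set V) := fun hvS => hv' (by simp_all)
    have hv₅ : v ≠ v₅ := fun hv₅ => hv' (by simp [hv₅])
    have hv₆ : v ≠ v₆ := by rintro rfl; exact hv h₆
    obtain ⟨x, y, z, hx, hy, hz, hxy, hxz, hyz⟩ :=
      exists_three_adj_of_degree_eq_three (hG.degree_eq v)
    have hK : ∀ w, G.Adj v w → (twinTriangleReduction G v₁ v₂ v₃ v₄ v₅ v₆).Adj v w := fun w hw =>
      (twinTriangleReduction_adj n₅₆).2 (.inl ⟨hw, hvS,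
        h.notMem_of_adj hG hw hvS (absurd · hv₅) (absurd · hv₆)⟩)
    exact hv (hc.exists_adj_eq (hK x hx) (hK y hy) (hK z hz) hxy hxz hyz γ)
  · rintro hv ⟨w, hw, hγ⟩
    have hvS := h.support_twinTriangleReduction_subset ⟨w, hw⟩
    rcases hv with rfl | rfl | rfl | rfl | rfl
    any_goals simp at hvS
    exact h₅ w hw hγ

end LocallyFinite

section Fintype

variable [Fintype V] [DecidableRel G.Adj]

theorem color_ne_v₆_of_color_ne_v₅ (h : IsTwinTriangle G v₁ v₂ v₃ v₄ v₅ v₆)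
    (hG : G.IsRegularOfDegree 3)
    {c : Sym2 V → Fin 3} (hc : IsProperEdgeColoring (twinTriangleReduction G v₁ v₂ v₃ v₄ v₅ v₆) c)
    {γ : Fin 3} (h₅ : ∀ x, (twinTriangleReduction G v₁ v₂ v₃ v₄ v₅ v₆).Adj v₅ x → c s(v₅, x) ≠ γ) :
    ∀ x, (twinTriangleReduction G v₁ v₂ v₃ v₄ v₅ v₆).Adj v₆ x → c s(v₆, x) ≠ γ := by
  by_contra! h₆
  have hcard := Set.ncard_add_ncard_compl
    {v | ∃ w, (twinTriangleReduction G v₁ v₂ v₃ v₄ v₅ v₆).Adj v w ∧ c s(v, w) = γ}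
  have hcard₅ : ({v₁, v₂, v₃, v₄, v₅} : Set V).ncard = 5 := by
    obtain ⟨⟨n₁₂, n₁₃, n₁₄, n₁₅, -⟩, ⟨n₂₃, n₂₄, n₂₅, -⟩, ⟨n₃₄, n₃₅, -⟩, ⟨n₄₅, -⟩, -⟩ :=
      h.pairwise_ne
    classical
    rw [Set.ncard_eq_toFinset_card']
    simp [Finset.card_insert_of_notMem, *]
  rw [h.compl_setOf_exists_adj_color_eq hG hc h₅ h₆, hcard₅, Nat.card_eq_fintype_card] at hcard
  obtain ⟨k, hk⟩ := hc.even_ncard_setOf_exists_adj γ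
  obtain ⟨m, hm⟩ := hG.even_card (by decide)
  omega

theorem exists_common_missing_color (h : IsTwinTriangle G v₁ v₂ v₃ v₄ v₅ v₆)
    (hG : G.IsRegularOfDegree 3)
    {c : Sym2 V → Fin 3} (hc : IsProperEdgeColoring (twinTriangleReduction G v₁ v₂ v₃ v₄ v₅ v₆) c) :
    ∃ γ, (∀ x, G.Adj v₅ x → x ≠ v₁ → c s(v₅, x) ≠ γ) ∧
      (∀ x, G.Adj v₆ x → x ≠ v₄ → c s(v₆, x) ≠ γ) := by
  obtain ⟨⟨-, -, -, n₁₅, n₁₆⟩, ⟨-, -, n₂₅, n₂₆⟩, ⟨-, n₃₅, n₃₆⟩, ⟨n₄₅, n₄₆⟩, n₅₆⟩ := h.pairwise_ne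
  have hv₅ : v₅ ∉ ({v₁, v₂, v₃, v₄} : Set V) := by simp [*, Ne.symm]
  have hv₆ : v₆ ∉ ({v₁, v₂, v₃, v₄} : Set V) := by simp [*, Ne.symm]
  have hK₅ : ∀ x, G.Adj v₅ x → x ≠ v₁ → (twinTriangleReduction G v₁ v₂ v₃ v₄ v₅ v₆).Adj v₅ x :=
    fun x hx hx₁ => (twinTriangleReduction_adj n₅₆).2
      (.inl ⟨hx, hv₅, h.notMem_of_adj hG hx hv₅ (fun _ => hx₁) (absurd · n₅₆)⟩)
  have hK₆ : ∀ x, G.Adj v₆ x → x ≠ v₄ → (twinTriangleReduction G v₁ v₂ v₃ v₄ v₅ v₆).Adj v₆ x :=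
    fun x hx hx₄ => (twinTriangleReduction_adj n₅₆).2
      (.inl ⟨hx, hv₆, h.notMem_of_adj hG hx hv₆ (absurd · n₅₆.symm) (fun _ => hx₄)⟩)
  have hK₅₆ : (twinTriangleReduction G v₁ v₂ v₃ v₄ v₅ v₆).Adj v₅ v₆ :=
    (twinTriangleReduction_adj n₅₆).2 (.inr rfl)
  by_cases hadj : G.Adj v₅ v₆
  · obtain ⟨x₅, hx₅, hx₅₁, hx₅₆⟩ := exists_adj_ne_ne_of_degree_eq_three (hG.degree_eq v₅) v₁ v₆
    have hN₅ := neighborSet_eq_of_degree_eq_three (hG.degree_eq v₅) h.adj₁₅.symm hadj hx₅ n₁₆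
      hx₅₁.symm hx₅₆.symm
    obtain ⟨γ, hγ₆, hγx⟩ := exists_ne_ne_fin_three (c s(v₅, v₆)) (c s(v₅, x₅))
    have h₅ : ∀ x, G.Adj v₅ x → x ≠ v₁ → c s(v₅, x) ≠ γ := by
      intro x hx hx₁
      rw [← mem_neighborSet, hN₅] at hx
      rcases hx with rfl | rfl | rfl
      exacts [absurd rfl hx₁, hγ₆, hγx]
    refine ⟨γ, h₅, fun x hx hx₄ =>
      h.color_ne_v₆_of_color_ne_v₅ hG hc (fun y hy => ?_) x (hK₆ x hx hx₄)⟩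
    rcases (twinTriangleReduction_adj n₅₆).1 hy with ⟨hy, -, hyS⟩ | hy
    · exact h₅ y hy (by rintro rfl; simp at hyS)
    · rwa [Sym2.congr_right.1 hy]
  · refine ⟨c s(v₅, v₆), fun x hx hx₁ => ?_, fun x hx hx₄ => ?_⟩
    · exact hc.ne (hK₅ x hx hx₁) hK₅₆ (by rintro rfl; exact hadj hx)
    · rw [Sym2.eq_swap (a := v₅)]
      exact hc.ne (hK₆ x hx hx₄) hK₅₆.symm (by rintro rfl; exact hadj hx.symm)

theorem threeEdgeColorable_of_twinTriangleReduction (h : IsTwinTriangle G v₁ v₂ v₃ v₄ v₅ v₆)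
    (hG : G.IsRegularOfDegree 3) :
    ThreeEdgeColorable (twinTriangleReduction G v₁ v₂ v₃ v₄ v₅ v₆) → ThreeEdgeColorable G := by
  classical
  rintro ⟨c, hc⟩
  obtain ⟨γ, h₅, h₆⟩ := h.exists_common_missing_color hG hc
  exact ⟨_, h.isProperEdgeColoring_twinTriangleExtension hG hc h₅ h₆⟩

theorem threeEdgeColorable_iff_twinTriangleReduction (h : IsTwinTriangle G v₁ v₂ v₃ v₄ v₅ v₆)
    (hG : G.IsRegularOfDegree 3) :
    ThreeEdgeColorable G ↔ ThreeEdgeColorable (twinTriangleReduction G v₁ v₂ v₃ v₄ v₅ v₆) :=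
  ⟨h.threeEdgeColorable_twinTriangleReduction, h.threeEdgeColorable_of_twinTriangleReduction hG⟩

end Fintype

end IsTwinTriangle

end

theorem stmt7_general {V : Type*} [Fintype V] (G : SimpleGraph V) [DecidableRel G.Adj]
    (v₁ v₂ v₃ v₄ v₅ v₆ : V)
    (hcubic : ∀ v, G.degree v = 3)
    (hdist : List.Pairwise (· ≠ ·) [v₁, v₂, v₃, v₄, v₅, v₆])
    (h12 : G.Adj v₁ v₂) (h23 : G.Adj v₂ v₃) (h24 : G.Adj v₂ v₄)
    (h13 : G.Adj v₁ v₃) (h34 : G.Adj v₃ v₄)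
    (h15 : G.Adj v₁ v₅) (h46 : G.Adj v₄ v₆) :
    ThreeEdgeColorable G ↔
      ThreeEdgeColorable
        ((SimpleGraph.fromRel (fun a b =>
            (G.Adj a b ∧ a ∉ ({v₁, v₂, v₃, v₄} : Set V) ∧ b ∉ ({v₁, v₂, v₃, v₄} : Set V)) ∨
            (a = v₅ ∧ b = v₆))).induce
          {x : V | x ∉ ({v₁, v₂, v₃, v₄} : Set V)}) := by
  have h : IsTwinTriangle G v₁ v₂ v₃ v₄ v₅ v₆ := ⟨hdist, h12, h23, h24, h13, h34, h15, h46⟩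
  exact (h.threeEdgeColorable_iff_twinTriangleReduction hcubic).trans
    (threeEdgeColorable_induce_iff h.support_twinTriangleReduction_subset).symm

/-- Deleting a twin-triangle `v₁,v₂,v₃,v₄` from a cubic graph and joining the two external
neighbors `v₅, v₆` by a new edge preserves 3-edge-colorability in both directions. -/
theorem stmt7 {V : Type*} [Fintype V] [DecidableEq V] (G : SimpleGraph V) [DecidableRel G.Adj]
    (v₁ v₂ v₃ v₄ v₅ v₆ : V)
    (hcubic : ∀ v, G.degree v = 3)
    (hdist : List.Pairwise (· ≠ ·) [v₁, v₂, v₃, v₄, v₅, v₆])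
    (h12 : G.Adj v₁ v₂) (h23 : G.Adj v₂ v₃) (h24 : G.Adj v₂ v₄)
    (h13 : G.Adj v₁ v₃) (h34 : G.Adj v₃ v₄)
    (h15 : G.Adj v₁ v₅) (h46 : G.Adj v₄ v₆) :
    ThreeEdgeColorable G ↔
      ThreeEdgeColorable
        ((SimpleGraph.fromRel (fun a b =>
            (G.Adj a b ∧ a ∉ ({v₁, v₂, v₃, v₄} : Set V) ∧ b ∉ ({v₁, v₂, v₃, v₄} : Set V)) ∨
            (a = v₅ ∧ b = v₆))).induce
          {x : V | x ∉ ({v₁, v₂, v₃, v₄} : Set V)}) :=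
  stmt7_general G v₁ v₂ v₃ v₄ v₅ v₆ hcubic hdist h12 h23 h24 h13 h34 h15 h46
end

section
/- For a planar cubic bridgeless graph G, if the faces of an embedding of G can be properly 4-colored (adjacent faces get distinct colors), then G is 3-edge-colorable (Tait's equivalence, one direction). -/
open SimpleGraph

/-- Map a nonzero Klein four-group element to a color in `Fin 3`. -/
def kleinToFin3 (p : ZMod 2 × ZMod 2) : Fin 3 :=
  if p = (1, 0) then 1 else if p = (1, 1) then 2 else 0

lemma kleinToFin3_inj : ∀ p q : ZMod 2 × ZMod 2, p ≠ 0 → q ≠ 0 → p ≠ q →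
    kleinToFin3 p ≠ kleinToFin3 q := by decide

/-- Sum of face colors over an unordered pair of faces. -/
def sumφ {F : Type*} (φ : F → ZMod 2 × ZMod 2) : Sym2 F → ZMod 2 × ZMod 2 :=
  Sym2.lift ⟨fun x y => φ x + φ y, fun x y => add_comm _ _⟩

/-- Tait's equivalence (one direction): let `G` be a bridgeless cubic graph embedded in
the plane, the embedding being recorded by the type `F` of its faces and the map `side`
giving the unordered pair of faces on the two sides of each edge, with the faces around
each (degree-3) vertex arranged cyclically.  If the faces can be properly 4-colored
(faces sharing an edge get distinct colors, the 4 colors being the elements of the Klein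
four-group `ZMod 2 × ZMod 2`), then `G` is 3-edge-colorable. -/
theorem stmt16 {V : Type*} [Fintype V] [DecidableEq V] (G : SimpleGraph V) [DecidableRel G.Adj]
    (hcubic : ∀ v, G.degree v = 3)
    (hbridgeless : ∀ e ∈ G.edgeSet, ¬ G.IsBridge e)
    (F : Type*) (side : Sym2 V → Sym2 F)
    (hemb : ∀ v a b c : V, G.Adj v a → G.Adj v b → G.Adj v c →
      a ≠ b → a ≠ c → b ≠ c →
      ∃ f₁ f₂ f₃ : F, side s(v, a) = s(f₁, f₂) ∧ side s(v, b) = s(f₂, f₃) ∧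
        side s(v, c) = s(f₃, f₁))
    (φ : F → ZMod 2 × ZMod 2)
    (hφ : ∀ e ∈ G.edgeSet, ∀ x y : F, side e = s(x, y) → φ x ≠ φ y) :
    ThreeEdgeColorable G := by
  classical
  -- the edge color: image of the sum of the two side faces' colors
  refine ⟨fun e => kleinToFin3 (sumφ φ (side e)), ?_⟩
  -- sum is nonzero on edges
  have hnz : ∀ e ∈ G.edgeSet, sumφ φ (side e) ≠ 0 := by
    intro e he
    obtain ⟨⟨x, y⟩, hse'⟩ := Quot.exists_rep (side e)
    have hse : side e = s(x, y) := hse'.symm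
    have hxy := hφ e he x y hse
    simp only [hse, sumφ, Sym2.lift_mk]
    intro h
    apply hxy
    have h2 : φ x = -(φ y) := add_eq_zero_iff_eq_neg.mp h
    rw [h2]
    ext <;> simp [ZMod.neg_eq_self_mod_two]
  intro e₁ he₁ e₂ he₂ hne ⟨v, hv₁, hv₂⟩
  -- write e₁ = s(v,a), e₂ = s(v,b)
  obtain ⟨a, rfl⟩ := Sym2.mem_iff_exists.mp hv₁
  obtain ⟨b, rfl⟩ := Sym2.mem_iff_exists.mp hv₂
  rw [SimpleGraph.mem_edgeSet] at he₁ he₂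
  have hab : a ≠ b := fun h => hne (by rw [h])
  -- find third neighbor c
  have hcard : (G.neighborFinset v).card = 3 := by rw [G.card_neighborFinset_eq_degree]; exact hcubic v
  have ha : a ∈ G.neighborFinset v := by simpa using he₁
  have hb : b ∈ G.neighborFinset v := by simpa using he₂
  have : ∃ c ∈ G.neighborFinset v, c ≠ a ∧ c ≠ b := by
    by_contra hcon
    push_neg at hcon
    have hsub : G.neighborFinset v ⊆ {a, b} := by
      intro x hx
      rcases Classical.em (x = a) with h | h
      · simp [h]
      rcases Classical.em (x = b) with h' | h'
      · simp [h']
      · exact absurd (hcon x hx h) h'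
    have := Finset.card_le_card hsub
    have h2 : ({a, b} : Finset V).card ≤ 2 :=
      (Finset.card_insert_le _ _).trans (by simp)
    omega
  obtain ⟨c, hc, hca, hcb⟩ := this
  rw [SimpleGraph.mem_neighborFinset] at hc
  obtain ⟨f₁, f₂, f₃, h1, h2, h3⟩ := hemb v a b c he₁ he₂ hc hab (Ne.symm hca) (Ne.symm hcb)
  simp only [h1, h2]
  apply kleinToFin3_inj
  · have := hnz s(v, a) (G.mem_edgeSet.mpr he₁); rwa [h1] at this
  · have := hnz s(v, b) (G.mem_edgeSet.mpr he₂); rwa [h2] at this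
  · simp only [sumφ, Sym2.lift_mk]
    intro h
    have h13 : φ f₁ = φ f₃ := by
      have := add_right_cancel (a := φ f₁) (b := φ f₂) (c := φ f₃) ?_
      · exact this
      · rw [h]; ring
    exact hφ s(v, c) (G.mem_edgeSet.mpr hc) f₃ f₁ h3 h13.symm
end
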